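/- Let ω be a control on [0,T], p ∈ [1,3), X ∈ C^p_ω([0,T],ℝ^d), and let 𝕏̃ : Δ_T → ℝ^d ⊗ ℝ^d satisfy |𝕏̃_{st}| ≤ C ω(s,t)^{2/p} and |𝕏̃_{st} − 𝕏̃_{su} − X_{su} ⊗ X_{ut} − 𝕏̃_{ut}| ≤ C ω(s,t)^θ for some constants C ≥ 0 and θ > 1 and all 0 ≤ s ≤ u ≤ t ≤ T (an almost rough path). Then there exists a unique continuous 𝕏 : Δ_T → ℝ^d ⊗ ℝ^d such that (X,𝕏) is a p-rough path controlled by ω and |𝕏_{st} − 𝕏̃_{st}| ≤ C' ω(s,t)^θ for some constant C'. If in addition |X^α_{st} X^β_{st} − 𝕏̃^{αβ}_{st} − 𝕏̃^{βα}_{st}| ≤ C ω(s,t)^θ for all α,β and all 0 ≤ s ≤ t ≤ T, then (X,𝕏) is geometric. -/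

import Mathlib

open Filter Topology Set

noncomputable section

/-- `ω` is a control on `[0,T]`: continuous on the simplex, vanishing on the diagonal,
superadditive and nonnegative. -/
def IsControl (T : ℝ) (ω : ℝ → ℝ → ℝ) : Prop :=
  ContinuousOn (fun q : ℝ × ℝ => ω q.1 q.2) {q : ℝ × ℝ | 0 ≤ q.1 ∧ q.1 ≤ q.2 ∧ q.2 ≤ T} ∧
    (∀ t : ℝ, 0 ≤ t → t ≤ T → ω t t = 0) ∧
    (∀ s u t : ℝ, 0 ≤ s → s ≤ u → u ≤ t → t ≤ T → ω s u + ω u t ≤ ω s t) ∧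
    (∀ s t : ℝ, 0 ≤ s → s ≤ t → t ≤ T → 0 ≤ ω s t)

/-- Membership in `C^{1/r}_ω([0,T],V)`: continuity on `[0,T]` together with the increment
bound `‖Y_t − Y_s‖ ≤ C ω(s,t)^r`. -/
def HolderPath (T r : ℝ) (ω : ℝ → ℝ → ℝ) {V : Type*} [NormedAddCommGroup V]
    (Y : ℝ → V) : Prop :=
  ContinuousOn Y (Set.Icc 0 T) ∧
    ∃ C : ℝ, ∀ s t : ℝ, 0 ≤ s → s ≤ t → t ≤ T → ‖Y t - Y s‖ ≤ C * ω s t ^ r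

/-- `(X, XX)` is a `p`-rough path controlled by `ω` on `[0,T]`. -/
def IsRoughPath (T p : ℝ) (ω : ℝ → ℝ → ℝ) {d : ℕ}
    (X : ℝ → Fin d → ℝ) (XX : ℝ → ℝ → Fin d → Fin d → ℝ) : Prop :=
  HolderPath T (1 / p) ω X ∧
    ContinuousOn (fun q : ℝ × ℝ => XX q.1 q.2) {q : ℝ × ℝ | 0 ≤ q.1 ∧ q.1 ≤ q.2 ∧ q.2 ≤ T} ∧
    (∃ C : ℝ, ∀ s t : ℝ, 0 ≤ s → s ≤ t → t ≤ T → ‖XX s t‖ ≤ C * ω s t ^ (2 / p)) ∧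
    (∀ s u t : ℝ, 0 ≤ s → s ≤ u → u ≤ t → t ≤ T → ∀ α β : Fin d,
      XX s t α β = XX s u α β + (X u α - X s α) * (X t β - X u β) + XX u t α β)

/-- `(H, H')` is an `X`-controlled path with values in `V`; `H' t γ` is the Gubinelli
derivative at time `t` in the direction of the `γ`-th coordinate. -/
def IsControlledPath (T p : ℝ) (ω : ℝ → ℝ → ℝ) {d : ℕ} (X : ℝ → Fin d → ℝ)
    {V : Type*} [NormedAddCommGroup V] [NormedSpace ℝ V]
    (H : ℝ → V) (H' : ℝ → Fin d → V) : Prop :=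
  HolderPath T (1 / p) ω H ∧ HolderPath T (1 / p) ω H' ∧
    ∃ C : ℝ, ∀ s t : ℝ, 0 ≤ s → s ≤ t → t ≤ T →
      ‖H t - H s - ∑ γ, (X t γ - X s γ) • H' s γ‖ ≤ C * ω s t ^ (2 / p)

/-- The bracket `[𝐗]` of the rough path `(X, XX)`. -/
def bracket {d : ℕ} (X : ℝ → Fin d → ℝ) (XX : ℝ → ℝ → Fin d → Fin d → ℝ)
    (s t : ℝ) (α β : Fin d) : ℝ :=
  (X t α - X s α) * (X t β - X s β) - (XX s t α β + XX s t β α)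

/-- A partition of `[s,t]` into `n` consecutive intervals. -/
structure RPartition (s t : ℝ) where
  n : ℕ
  pts : ℕ → ℝ
  mono : Monotone pts
  first : pts 0 = s
  last : pts n = t

/-- The mesh of a partition. -/
def RPartition.mesh {s t : ℝ} (π : RPartition s t) : ℝ :=
  ⨆ i : Fin π.n, (π.pts (i.1 + 1) - π.pts i.1)

/-- The Riemann sum of a two-parameter summand along a partition. -/
def riemannSum {s t : ℝ} {V : Type*} [AddCommMonoid V]
    (π : RPartition s t) (f : ℝ → ℝ → V) : V :=
  ∑ i ∈ Finset.range π.n, f (π.pts i) (π.pts (i + 1))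

/-- `L` is the limit of the Riemann sums of `f` along every sequence of partitions of `[s,t]`
with mesh tending to `0`. -/
def RSumLimit {V : Type*} [AddCommMonoid V] [TopologicalSpace V] (s t : ℝ)
    (f : ℝ → ℝ → V) (L : V) : Prop :=
  ∀ π : ℕ → RPartition s t,
    Tendsto (fun n => (π n).mesh) atTop (𝓝 0) →
      Tendsto (fun n => riemannSum (π n) f) atTop (𝓝 L)

/-- The compensated Riemann summand `H_u X_{uv} + H'_u 𝕏_{uv}` of a controlled integrand
against a rough path. -/
def roughSummand {d e : ℕ} (X : ℝ → Fin d → ℝ) (XX : ℝ → ℝ → Fin d → Fin d → ℝ)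
    (H : ℝ → Fin e → Fin d → ℝ) (H' : ℝ → Fin d → Fin e → Fin d → ℝ) :
    ℝ → ℝ → Fin e → ℝ :=
  fun u v k => (∑ γ, H u k γ * (X v γ - X u γ)) + ∑ α, ∑ β, H' u α k β * XX u v α β

/-- The partial derivative `∂_α f^i (x)`. -/
def pderiv {m n : ℕ} (f : (Fin m → ℝ) → (Fin n → ℝ)) (x : Fin m → ℝ)
    (α : Fin m) (i : Fin n) : ℝ :=
  fderiv ℝ f x (Pi.single α 1) i

/-- The second partial derivative `∂_{αβ} f^k (x)`. -/
def pderiv2 {m n : ℕ} (f : (Fin m → ℝ) → (Fin n → ℝ)) (x : Fin m → ℝ)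
    (α β : Fin m) (k : Fin n) : ℝ :=
  fderiv ℝ (fun y => fderiv ℝ f y (Pi.single β 1) k) x (Pi.single α 1)

/-!
The sewing lemma does the work. With increments anchored at `X 0`, the germ
`A s t = Xt s t + (X s - X 0) ⊗ (X t - X s)` has additivity defect `A s t - A s u - A u t`
equal to the Chen defect of `Xt`, hence `O(ω ^ θ)`. Sewing yields an additive `I` with
`I - A = O(ω ^ θ)`: the limit of the Riemann sums of `A` along successive `ω`-bisections of
`[s,t]`, additive because any two fine partitions have Riemann sums close to that of their common
refinement. Then `XX s t = I s t - (X s - X 0) ⊗ (X t - X s)` satisfies Chen's identity exactly.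
Since the Chen defect is also crudely `O(ω ^ (2/p))`, sewing may be done with the exponent
`max θ (2/p)`, which gives the `ω ^ (2/p)` bound on `XX` as well.

Uniqueness and geometricity come from rigidity: a function of intervals that is additive and
`O(ω ^ θ)` with `θ > 1` vanishes, as bisecting `n` times bounds it by `(2 ^ (1 - θ)) ^ n ω ^ θ`.
-/

lemma two_pow_mul_rpow_div_two_pow {x : ℝ} (hx : 0 ≤ x) (θ : ℝ) (n : ℕ) :
    (2 : ℝ) ^ n * (x / 2 ^ n) ^ θ = x ^ θ * ((2 : ℝ) ^ (1 - θ)) ^ n := by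
  have h : ((2 : ℝ) ^ (1 - θ)) ^ n = 2 ^ (n : ℝ) / 2 ^ ((n : ℝ) * θ) := by
    rw [← Real.rpow_natCast, ← Real.rpow_mul zero_le_two, ← Real.rpow_sub zero_lt_two]
    ring_nf
  rw [h, Real.div_rpow hx (by positivity), ← Real.rpow_natCast, ← Real.rpow_mul zero_le_two]
  field_simp

lemma two_rpow_one_sub_lt_one {θ : ℝ} (hθ : 1 < θ) : (2 : ℝ) ^ (1 - θ) < 1 :=
  Real.rpow_lt_one_of_one_lt_of_neg one_lt_two (by linarith)

lemma tendsto_mul_two_rpow_one_sub_pow {θ : ℝ} (hθ : 1 < θ) (c : ℝ) :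
    Tendsto (fun n : ℕ => c * ((2 : ℝ) ^ (1 - θ)) ^ n) atTop (𝓝 0) := by
  simpa using (tendsto_pow_atTop_nhds_zero_of_lt_one (by positivity)
    (two_rpow_one_sub_lt_one hθ)).const_mul c

open Classical in
/-- Junk value `s` when no such point exists (never, for a control:
`IsControl.exists_halving`). -/
def halvingPoint (ω : ℝ → ℝ → ℝ) (s t : ℝ) : ℝ :=
  if h : ∃ m ∈ Icc s t, ω s m ≤ ω s t / 2 ∧ ω m t ≤ ω s t / 2 then h.choose else s

namespace IsControl

variable {T : ℝ} {ω : ℝ → ℝ → ℝ}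

lemma nonneg (hω : IsControl T ω) {s t : ℝ} (hs : 0 ≤ s) (hst : s ≤ t) (ht : t ≤ T) :
    0 ≤ ω s t :=
  hω.2.2.2 s t hs hst ht

lemma diag (hω : IsControl T ω) {t : ℝ} (ht₀ : 0 ≤ t) (ht : t ≤ T) : ω t t = 0 :=
  hω.2.1 t ht₀ ht

lemma add_le (hω : IsControl T ω) {s u t : ℝ} (hs : 0 ≤ s) (hsu : s ≤ u) (hut : u ≤ t)
    (ht : t ≤ T) : ω s u + ω u t ≤ ω s t :=
  hω.2.2.1 s u t hs hsu hut ht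

lemma mono (hω : IsControl T ω) {s' s t t' : ℝ} (hs' : 0 ≤ s') (hs : s' ≤ s) (hst : s ≤ t)
    (ht : t ≤ t') (ht' : t' ≤ T) : ω s t ≤ ω s' t' := by
  have := hω.add_le hs' hs (hst.trans ht) ht'
  have := hω.add_le (hs'.trans hs) hst ht ht'
  have := hω.nonneg hs' hs ((hst.trans ht).trans ht')
  have := hω.nonneg (hs'.trans (hs.trans hst)) ht ht'
  linarith

lemma rpow_le_mul_rpow (hω : IsControl T ω) {a b : ℝ} (ha : 0 ≤ a) (hab : a ≤ b) {s t : ℝ}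
    (hs : 0 ≤ s) (hst : s ≤ t) (ht : t ≤ T) :
    ω s t ^ b ≤ ω 0 T ^ (b - a) * ω s t ^ a := by
  have hω₀ := hω.nonneg hs hst ht
  rw [show b = (b - a) + a by ring, Real.rpow_add_of_nonneg hω₀ (sub_nonneg.2 hab) ha,
    add_sub_cancel_right]
  gcongr
  exact hω.mono le_rfl hs hst ht le_rfl

lemma exists_halving (hω : IsControl T ω) {s t : ℝ} (hs : 0 ≤ s) (hst : s ≤ t) (ht : t ≤ T) :
    ∃ m ∈ Icc s t, ω s m ≤ ω s t / 2 ∧ ω m t ≤ ω s t / 2 := by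
  have hcont : ContinuousOn (fun u => ω s u) (Icc s t) :=
    hω.1.comp (continuous_const.prodMk continuous_id).continuousOn
      fun u hu => ⟨hs, hu.1, hu.2.trans ht⟩
  have hmid : ω s t / 2 ∈ Icc (ω s s) (ω s t) := by
    rw [hω.diag hs (hst.trans ht)]
    constructor <;> linarith [hω.nonneg hs hst ht]
  obtain ⟨m, hm, hωm⟩ := intermediate_value_Icc hst hcont hmid
  refine ⟨m, hm, hωm.le, ?_⟩
  linarith [hω.add_le hs hm.1 hm.2 ht, show ω s m = ω s t / 2 from hωm]

lemma halvingPoint_spec (hω : IsControl T ω) {s t : ℝ} (hs : 0 ≤ s) (hst : s ≤ t)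
    (ht : t ≤ T) :
    halvingPoint ω s t ∈ Icc s t ∧ ω s (halvingPoint ω s t) ≤ ω s t / 2 ∧
      ω (halvingPoint ω s t) t ≤ ω s t / 2 := by
  have h := hω.exists_halving hs hst ht
  rw [halvingPoint, dif_pos h]
  exact h.choose_spec

/-- Each bisection doubles the number of terms and halves `ω`, a net factor
`2 * 2 ^ (-θ) = 2 ^ (1 - θ)`. -/
lemma le_mul_geometric_of_halving (hω : IsControl T ω) {θ L : ℝ} (hθ : 0 ≤ θ) (hL : 0 ≤ L)
    {F : ℕ → ℝ → ℝ → ℝ}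
    (h₀ : ∀ a b, 0 ≤ a → a ≤ b → b ≤ T → F 0 a b ≤ L * ω a b ^ θ)
    (hsucc : ∀ n a b, 0 ≤ a → a ≤ b → b ≤ T →
      F (n + 1) a b ≤ F n a (halvingPoint ω a b) + F n (halvingPoint ω a b) b)
    (n : ℕ) {a b : ℝ} (ha : 0 ≤ a) (hab : a ≤ b) (hb : b ≤ T) :
    F n a b ≤ L * ω a b ^ θ * ((2 : ℝ) ^ (1 - θ)) ^ n := by
  induction n generalizing a b with
  | zero => simpa using h₀ a b ha hab hb
  | succ n ih =>
    obtain ⟨⟨ham, hmb⟩, hω₁, hω₂⟩ := hω.halvingPoint_spec ha hab hb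
    set m := halvingPoint ω a b
    have hhalf : ∀ {x y}, 0 ≤ x → x ≤ y → y ≤ T → ω x y ≤ ω a b / 2 →
        L * ω x y ^ θ * ((2 : ℝ) ^ (1 - θ)) ^ n ≤
          L * (ω a b / 2) ^ θ * ((2 : ℝ) ^ (1 - θ)) ^ n := fun hx hxy hy h => by
      gcongr
      exact hω.nonneg hx hxy hy
    have htwo := two_pow_mul_rpow_div_two_pow (hω.nonneg ha hab hb) θ 1
    simp only [pow_one] at htwo
    calc F (n + 1) a b ≤ F n a m + F n m b := hsucc n a b ha hab hb
      _ ≤ L * (ω a b / 2) ^ θ * ((2 : ℝ) ^ (1 - θ)) ^ n +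
          L * (ω a b / 2) ^ θ * ((2 : ℝ) ^ (1 - θ)) ^ n :=
        add_le_add ((ih ha ham (hmb.trans hb)).trans (hhalf ha ham (hmb.trans hb) hω₁))
          ((ih (ha.trans ham) hmb hb).trans (hhalf (ha.trans ham) hmb hb hω₂))
      _ = L * ω a b ^ θ * ((2 : ℝ) ^ (1 - θ)) ^ (n + 1) := by
        rw [pow_succ]; linear_combination (L * ((2 : ℝ) ^ (1 - θ)) ^ n) * htwo

theorem eq_zero_of_additive {E : Type*} [NormedAddCommGroup E] (hω : IsControl T ω) {θ L : ℝ}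
    (hθ : 1 < θ) {g : ℝ → ℝ → E}
    (hadd : ∀ s u t, 0 ≤ s → s ≤ u → u ≤ t → t ≤ T → g s t = g s u + g u t)
    (hg : ∀ s t, 0 ≤ s → s ≤ t → t ≤ T → ‖g s t‖ ≤ L * ω s t ^ θ)
    {s t : ℝ} (hs : 0 ≤ s) (hst : s ≤ t) (ht : t ≤ T) : g s t = 0 := by
  have hg' : ∀ a b, 0 ≤ a → a ≤ b → b ≤ T → ‖g a b‖ ≤ max L 0 * ω a b ^ θ :=
    fun a b ha hab hb => (hg a b ha hab hb).trans
      (by gcongr; exacts [Real.rpow_nonneg (hω.nonneg ha hab hb) _, le_max_left _ _])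
  have hbound (n : ℕ) := hω.le_mul_geometric_of_halving (F := fun _ a b => ‖g a b‖)
    (by linarith) (le_max_right L 0) hg'
    (fun n a b ha hab hb => by
      obtain ⟨⟨ham, hmb⟩, -⟩ := hω.halvingPoint_spec ha hab hb
      rw [hadd a _ b ha ham hmb hb]
      exact norm_add_le _ _) n hs hst ht
  exact norm_le_zero_iff.1
    (ge_of_tendsto (tendsto_mul_two_rpow_one_sub_pow hθ _) (.of_forall hbound))

end IsControl

/-- The points `s :: l` partition `[s,t]` into intervals of `ω`-size at most `ε`. -/
inductive IsFinePartition (ω : ℝ → ℝ → ℝ) (ε : ℝ) : ℝ → ℝ → List ℝ → Prop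
  | nil (s : ℝ) : IsFinePartition ω ε s s []
  | cons {s b t : ℝ} {l : List ℝ} :
      s ≤ b → ω s b ≤ ε → IsFinePartition ω ε b t l → IsFinePartition ω ε s t (b :: l)

namespace IsFinePartition

variable {ω : ℝ → ℝ → ℝ} {ε : ℝ} {s t : ℝ} {l : List ℝ}

lemma le (hP : IsFinePartition ω ε s t l) : s ≤ t := by
  induction hP with
  | nil => exact le_rfl
  | cons hsb _ _ ih => exact hsb.trans ih

lemma mem_Icc (hP : IsFinePartition ω ε s t l) : ∀ x ∈ l, x ∈ Icc s t := by
  induction hP with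
  | nil => simp
  | cons hsb _ hP ih =>
    rintro x (_ | ⟨_, hx⟩)
    · exact ⟨hsb, hP.le⟩
    · exact ⟨hsb.trans (ih x hx).1, (ih x hx).2⟩

lemma getLastD_eq (hP : IsFinePartition ω ε s t l) : l.getLastD s = t := by
  induction hP with
  | nil => rfl
  | cons _ _ _ ih => rwa [List.getLastD_cons]

lemma pairwise (hP : IsFinePartition ω ε s t l) : l.Pairwise (· ≤ ·) := by
  induction hP with
  | nil => exact List.Pairwise.nil
  | cons _ _ hP ih => exact ih.cons fun x hx => (hP.mem_Icc x hx).1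

lemma mono {ε' : ℝ} (hP : IsFinePartition ω ε s t l) (hε : ε ≤ ε') :
    IsFinePartition ω ε' s t l := by
  induction hP with
  | nil s => exact nil s
  | cons hsb hω _ ih => exact cons hsb (hω.trans hε) ih

lemma append {u : ℝ} {l' : List ℝ} (hP : IsFinePartition ω ε s u l)
    (hQ : IsFinePartition ω ε u t l') : IsFinePartition ω ε s t (l ++ l') := by
  induction hP with
  | nil => exact hQ
  | cons hsb hω _ ih => exact cons hsb hω (ih hQ)

lemma orderedInsert {T : ℝ} (hω : IsControl T ω) (hε : 0 ≤ ε)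
    (hP : IsFinePartition ω ε s t l) (hs : 0 ≤ s) (ht : t ≤ T) {x : ℝ} (hx : x ∈ Icc s t) :
    IsFinePartition ω ε s t (l.orderedInsert (· ≤ ·) x) := by
  induction hP with
  | nil s =>
    obtain rfl : x = s := le_antisymm hx.2 hx.1
    exact cons le_rfl (by rw [hω.diag hs ht]; exact hε) (nil x)
  | @cons s b t l hsb hωsb hP ih =>
    have hbt := hP.le
    rw [List.orderedInsert_cons]
    split_ifs with hxb
    · refine cons hx.1 ((hω.mono hs le_rfl hx.1 hxb (hbt.trans ht)).trans hωsb)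
        (cons hxb ((hω.mono hs hx.1 hxb le_rfl (hbt.trans ht)).trans hωsb) hP)
    · exact cons hsb hωsb (ih (hs.trans hsb) ht ⟨(not_le.1 hxb).le, hx.2⟩)

lemma foldr_orderedInsert {T : ℝ} (hω : IsControl T ω) (hε : 0 ≤ ε)
    (hP : IsFinePartition ω ε s t l) (hs : 0 ≤ s) (ht : t ≤ T) {l' : List ℝ}
    (hl' : ∀ x ∈ l', x ∈ Icc s t) :
    IsFinePartition ω ε s t (l'.foldr (List.orderedInsert (· ≤ ·)) l) := by
  induction l' with
  | nil => exact hP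
  | cons x l' ih =>
    exact (ih fun y hy => hl' y (.tail x hy)).orderedInsert hω hε hs ht (hl' x (.head l'))

end IsFinePartition

lemma List.perm_foldr_orderedInsert {α : Type*} (r : α → α → Prop) [DecidableRel r]
    (l l' : List α) : (l'.foldr (List.orderedInsert r) l).Perm (l' ++ l) := by
  induction l' with
  | nil => rfl
  | cons x l' ih => exact (List.perm_orderedInsert _ x _).trans (ih.cons x)

/-- The `n`-th bisection of `[s,t]` at `ω`-halving points, without its initial point `s`. -/
def dyadicPartition (ω : ℝ → ℝ → ℝ) : ℕ → ℝ → ℝ → List ℝ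
  | 0, _, t => [t]
  | n + 1, s, t =>
    dyadicPartition ω n s (halvingPoint ω s t) ++ dyadicPartition ω n (halvingPoint ω s t) t

section Dyadic

variable {ω : ℝ → ℝ → ℝ}

lemma length_dyadicPartition (n : ℕ) (s t : ℝ) : (dyadicPartition ω n s t).length = 2 ^ n := by
  induction n generalizing s t with
  | zero => rfl
  | succ n ih => simp [dyadicPartition, ih, pow_succ, mul_two]

lemma getLast?_dyadicPartition (n : ℕ) (s t : ℝ) :
    (dyadicPartition ω n s t).getLast? = some t := by
  induction n generalizing s t with
  | zero => rfl
  | succ n ih => simp [dyadicPartition, List.getLast?_append, ih]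

lemma IsControl.isFinePartition_dyadicPartition {T : ℝ} (hω : IsControl T ω) (n : ℕ) {s t : ℝ}
    (hs : 0 ≤ s) (hst : s ≤ t) (ht : t ≤ T) :
    IsFinePartition ω (ω s t / 2 ^ n) s t (dyadicPartition ω n s t) := by
  induction n generalizing s t with
  | zero => simpa [dyadicPartition] using IsFinePartition.cons hst le_rfl (.nil t)
  | succ n ih =>
    obtain ⟨⟨hsm, hmt⟩, hω₁, hω₂⟩ := hω.halvingPoint_spec hs hst ht
    have hhalf {x : ℝ} (hx : x ≤ ω s t / 2) : x / 2 ^ n ≤ ω s t / 2 ^ (n + 1) := by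
      rw [pow_succ, mul_comm, ← div_div]; gcongr
    exact ((ih hs hsm (hmt.trans ht)).mono (hhalf hω₁)).append
      ((ih (hs.trans hsm) hmt ht).mono (hhalf hω₂))

end Dyadic

section Sewing

variable {E : Type*} [NormedAddCommGroup E]

def germSum (A : ℝ → ℝ → E) : ℝ → List ℝ → E
  | _, [] => 0
  | s, b :: l => A s b + germSum A b l

lemma germSum_append (A : ℝ → ℝ → E) (s : ℝ) (l l' : List ℝ) :
    germSum A s (l ++ l') = germSum A s l + germSum A (l.getLastD s) l' := by
  induction l generalizing s with
  | nil => simp [germSum]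
  | cons b l ih => rw [List.cons_append, germSum, germSum, ih, List.getLastD_cons, add_assoc]

variable {ω : ℝ → ℝ → ℝ}

lemma germSum_dyadicPartition_zero (A : ℝ → ℝ → E) (s t : ℝ) :
    germSum A s (dyadicPartition ω 0 s t) = A s t := by
  simp [dyadicPartition, germSum]

lemma germSum_dyadicPartition_succ (A : ℝ → ℝ → E) (n : ℕ) (s t : ℝ) :
    germSum A s (dyadicPartition ω (n + 1) s t) =
      germSum A s (dyadicPartition ω n s (halvingPoint ω s t)) +
        germSum A (halvingPoint ω s t) (dyadicPartition ω n (halvingPoint ω s t) t) := by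
  rw [dyadicPartition, germSum_append]
  simp [getLast?_dyadicPartition]

def IsAlmostAdditive (T : ℝ) (ω : ℝ → ℝ → ℝ) (C θ : ℝ) (A : ℝ → ℝ → E) : Prop :=
  ∀ s u t, 0 ≤ s → s ≤ u → u ≤ t → t ≤ T → ‖A s t - A s u - A u t‖ ≤ C * ω s t ^ θ

namespace IsAlmostAdditive

variable {T C θ ε : ℝ} {A : ℝ → ℝ → E}

lemma apply_self_eq_zero (hA : IsAlmostAdditive T ω C θ A) (hω : IsControl T ω) (hθ : 0 < θ)
    {a : ℝ} (ha : 0 ≤ a) (haT : a ≤ T) : A a a = 0 := by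
  have h := hA a a a ha le_rfl le_rfl haT
  rw [hω.diag ha haT, Real.zero_rpow hθ.ne', mul_zero, sub_self, zero_sub, norm_neg] at h
  exact norm_le_zero_iff.1 h

lemma norm_germSum_orderedInsert_sub_le (hA : IsAlmostAdditive T ω C θ A)
    (hω : IsControl T ω) (hC : 0 ≤ C) (hθ : 0 < θ) (hε : 0 ≤ ε) {s t : ℝ} {l : List ℝ}
    (hP : IsFinePartition ω ε s t l) (hs : 0 ≤ s) (ht : t ≤ T) {x : ℝ} (hx : x ∈ Icc s t) :
    ‖germSum A s (l.orderedInsert (· ≤ ·) x) - germSum A s l‖ ≤ C * ε ^ θ := by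
  induction hP with
  | nil s =>
    obtain rfl : x = s := le_antisymm hx.2 hx.1
    simp only [List.orderedInsert, germSum, add_zero, sub_zero,
      hA.apply_self_eq_zero hω hθ hs ht, norm_zero]
    positivity
  | @cons s b t l hsb hωsb hP ih =>
    have hbt := hP.le
    rw [List.orderedInsert_cons]
    split_ifs with hxb
    · calc ‖germSum A s (x :: b :: l) - germSum A s (b :: l)‖
          = ‖A s b - A s x - A x b‖ := by
            rw [← norm_neg]; simp only [germSum]; congr 1; abel
        _ ≤ C * ω s b ^ θ := hA s x b hs hx.1 hxb (hbt.trans ht)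
        _ ≤ C * ε ^ θ := by gcongr; exact hω.nonneg hs hsb (hbt.trans ht)
    · simpa only [germSum, add_sub_add_left_eq_sub] using
        ih (hs.trans hsb) ht ⟨(not_le.1 hxb).le, hx.2⟩

lemma norm_germSum_foldr_orderedInsert_sub_le (hA : IsAlmostAdditive T ω C θ A)
    (hω : IsControl T ω) (hC : 0 ≤ C) (hθ : 0 < θ) (hε : 0 ≤ ε) {s t : ℝ} {l : List ℝ}
    (hP : IsFinePartition ω ε s t l) (hs : 0 ≤ s) (ht : t ≤ T) {l' : List ℝ}
    (hl' : ∀ x ∈ l', x ∈ Icc s t) :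
    ‖germSum A s (l'.foldr (List.orderedInsert (· ≤ ·)) l) - germSum A s l‖ ≤
      l'.length * (C * ε ^ θ) := by
  induction l' with
  | nil => simp
  | cons x l' ih =>
    have hl'' : ∀ y ∈ l', y ∈ Icc s t := fun y hy => hl' y (.tail x hy)
    have h := hA.norm_germSum_orderedInsert_sub_le hω hC hθ hε
      (hP.foldr_orderedInsert hω hε hs ht hl'') hs ht (hl' x (.head l'))
    rw [List.foldr_cons, List.length_cons, Nat.cast_succ, add_one_mul]
    linarith [norm_sub_le_norm_sub_add_norm_sub
      (germSum A s ((l'.foldr (List.orderedInsert (· ≤ ·)) l).orderedInsert (· ≤ ·) x))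
      (germSum A s (l'.foldr (List.orderedInsert (· ≤ ·)) l)) (germSum A s l), ih hl'']

/-- Both sums are compared with the sum over the common refinement, obtained by inserting the
points of each partition into the other one at a time. -/
lemma norm_germSum_sub_le (hA : IsAlmostAdditive T ω C θ A) (hω : IsControl T ω) (hC : 0 ≤ C)
    (hθ : 0 < θ) (hε : 0 ≤ ε) {s t : ℝ} {l l' : List ℝ} (hP : IsFinePartition ω ε s t l)
    (hQ : IsFinePartition ω ε s t l') (hs : 0 ≤ s) (ht : t ≤ T) :
    ‖germSum A s l - germSum A s l'‖ ≤ (l.length + l'.length) * (C * ε ^ θ) := by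
  have hcommon : l'.foldr (List.orderedInsert (· ≤ ·)) l =
      l.foldr (List.orderedInsert (· ≤ ·)) l' :=
    List.Perm.eq_of_pairwise' (r := (· ≤ ·))
      ((hP.foldr_orderedInsert hω hε hs ht hQ.mem_Icc).pairwise)
      ((hQ.foldr_orderedInsert hω hε hs ht hP.mem_Icc).pairwise)
      ((List.perm_foldr_orderedInsert _ l l').trans (List.perm_append_comm.trans
        (List.perm_foldr_orderedInsert _ l' l).symm))
  have h₁ := hA.norm_germSum_foldr_orderedInsert_sub_le hω hC hθ hε hP hs ht hQ.mem_Icc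
  have h₂ := hA.norm_germSum_foldr_orderedInsert_sub_le hω hC hθ hε hQ hs ht hP.mem_Icc
  rw [hcommon] at h₁
  set R := l.foldr (List.orderedInsert (· ≤ ·)) l'
  calc ‖germSum A s l - germSum A s l'‖
      ≤ ‖germSum A s l - germSum A s R‖ + ‖germSum A s R - germSum A s l'‖ :=
        norm_sub_le_norm_sub_add_norm_sub _ _ _
    _ ≤ (l.length + l'.length) * (C * ε ^ θ) := by
      rw [norm_sub_rev]; linarith

lemma norm_germSum_dyadicPartition_succ_sub_le (hA : IsAlmostAdditive T ω C θ A)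
    (hω : IsControl T ω) (hC : 0 ≤ C) (hθ : 0 ≤ θ) (n : ℕ) {s t : ℝ} (hs : 0 ≤ s)
    (hst : s ≤ t) (ht : t ≤ T) :
    ‖germSum A s (dyadicPartition ω (n + 1) s t) - germSum A s (dyadicPartition ω n s t)‖ ≤
      C * ω s t ^ θ * ((2 : ℝ) ^ (1 - θ)) ^ n := by
  refine hω.le_mul_geometric_of_halving hθ hC
    (F := fun n a b => ‖germSum A a (dyadicPartition ω (n + 1) a b) -
      germSum A a (dyadicPartition ω n a b)‖) (fun a b ha hab hb => ?_)
    (fun n a b ha hab hb => ?_) n hs hst ht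
  · obtain ⟨⟨ham, hmb⟩, -⟩ := hω.halvingPoint_spec ha hab hb
    simp only [germSum_dyadicPartition_succ, germSum_dyadicPartition_zero]
    refine le_of_eq_of_le ?_ (hA a _ b ha ham hmb hb)
    rw [← norm_neg]
    congr 1
    abel
  · simp only [germSum_dyadicPartition_succ (n := n + 1), germSum_dyadicPartition_succ (n := n)]
    exact (norm_add_le _ _).trans_eq' (by congr 1; abel)

lemma norm_germSum_dyadicPartition_sub_add_le (hA : IsAlmostAdditive T ω C θ A)
    (hω : IsControl T ω) (hC : 0 ≤ C) (hθ : 0 < θ) (n : ℕ) {s u t : ℝ} (hs : 0 ≤ s)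
    (hsu : s ≤ u) (hut : u ≤ t) (ht : t ≤ T) :
    ‖germSum A s (dyadicPartition ω n s t) -
        (germSum A s (dyadicPartition ω n s u) + germSum A u (dyadicPartition ω n u t))‖ ≤
      3 * C * ω s t ^ θ * ((2 : ℝ) ^ (1 - θ)) ^ n := by
  have hωst := hω.nonneg hs (hsu.trans hut) ht
  have hP := hω.isFinePartition_dyadicPartition n hs (hsu.trans hut) ht
  have hQ : IsFinePartition ω (ω s t / 2 ^ n) s t
      (dyadicPartition ω n s u ++ dyadicPartition ω n u t) :=
    ((hω.isFinePartition_dyadicPartition n hs hsu (hut.trans ht)).mono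
      (by gcongr; exact hω.mono hs le_rfl hsu hut ht)).append
    ((hω.isFinePartition_dyadicPartition n (hs.trans hsu) hut ht).mono
      (by gcongr; exact hω.mono hs hsu hut le_rfl ht))
  have h := hA.norm_germSum_sub_le hω hC hθ (by positivity) hP hQ hs ht
  rw [germSum_append, (hω.isFinePartition_dyadicPartition n hs hsu (hut.trans ht)).getLastD_eq,
    List.length_append, length_dyadicPartition, length_dyadicPartition,
    length_dyadicPartition] at h
  refine h.trans_eq ?_
  push_cast
  linear_combination 3 * C * two_pow_mul_rpow_div_two_pow hωst θ n

theorem exists_additive [CompleteSpace E] (hA : IsAlmostAdditive T ω C θ A)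
    (hω : IsControl T ω) (hC : 0 ≤ C) (hθ : 1 < θ) :
    ∃ I : ℝ → ℝ → E,
      (∀ s u t, 0 ≤ s → s ≤ u → u ≤ t → t ≤ T → I s t = I s u + I u t) ∧
      ∀ s t, 0 ≤ s → s ≤ t → t ≤ T → ‖I s t - A s t‖ ≤ C / (1 - 2 ^ (1 - θ)) * ω s t ^ θ := by
  have hstep (s t : ℝ) (hs : 0 ≤ s) (hst : s ≤ t) (ht : t ≤ T) (n : ℕ) :
      dist (germSum A s (dyadicPartition ω n s t)) (germSum A s (dyadicPartition ω (n + 1) s t))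
        ≤ C * ω s t ^ θ * ((2 : ℝ) ^ (1 - θ)) ^ n := by
    rw [dist_comm, dist_eq_norm]
    exact hA.norm_germSum_dyadicPartition_succ_sub_le hω hC (by linarith) n hs hst ht
  have hlim (s t : ℝ) (hs : 0 ≤ s) (hst : s ≤ t) (ht : t ≤ T) :=
    (cauchySeq_of_le_geometric _ _ (two_rpow_one_sub_lt_one hθ)
      (hstep s t hs hst ht)).tendsto_limUnder
  refine ⟨fun s t => limUnder atTop fun n => germSum A s (dyadicPartition ω n s t),
    fun s u t hs hsu hut ht => ?_, fun s t hs hst ht => ?_⟩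
  · have hdefect := squeeze_zero_norm
      (fun n => hA.norm_germSum_dyadicPartition_sub_add_le hω hC (by linarith) n hs hsu hut ht)
      (tendsto_mul_two_rpow_one_sub_pow hθ _)
    exact sub_eq_zero.1 (tendsto_nhds_unique ((hlim s t hs (hsu.trans hut) ht).sub
      ((hlim s u hs hsu (hut.trans ht)).add (hlim u t (hs.trans hsu) hut ht))) hdefect)
  · have h := dist_le_of_le_geometric_of_tendsto₀ _ _ (two_rpow_one_sub_lt_one hθ)
      (hstep s t hs hst ht) (hlim s t hs hst ht)
    rw [dist_comm, dist_eq_norm, germSum_dyadicPartition_zero] at h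
    exact h.trans_eq (by ring)

end IsAlmostAdditive

end Sewing

lemma continuousOn_Icc_of_norm_sub_le {F : Type*} [SeminormedAddCommGroup F] {T : ℝ}
    {f : ℝ → F} {g : ℝ → ℝ → ℝ}
    (hg : ContinuousOn (fun q : ℝ × ℝ => g q.1 q.2) {q : ℝ × ℝ | 0 ≤ q.1 ∧ q.1 ≤ q.2 ∧ q.2 ≤ T})
    (hg₀ : ∀ t ∈ Icc 0 T, g t t = 0)
    (hf : ∀ a b, 0 ≤ a → a ≤ b → b ≤ T → ‖f b - f a‖ ≤ g a b) :
    ContinuousOn f (Icc 0 T) := by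
  intro b hb
  have hφ : ContinuousWithinAt (fun x => g (min x b) (max x b)) (Icc 0 T) b :=
    hg.comp ((continuous_id.min continuous_const).prodMk
      (continuous_id.max continuous_const)).continuousOn
      (fun x hx => ⟨le_min hx.1 hb.1, min_le_max, max_le hx.2 hb.2⟩) b hb
  rw [ContinuousWithinAt, min_self, max_self, hg₀ b hb] at hφ
  rw [ContinuousWithinAt, tendsto_iff_norm_sub_tendsto_zero]
  refine squeeze_zero_norm' (eventually_nhdsWithin_of_forall fun x hx => ?_) hφ
  rw [norm_norm]
  rcases le_total x b with hxb | hbx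
  · rw [min_eq_left hxb, max_eq_right hxb, norm_sub_rev]
    exact hf x b hx.1 hxb hb.2
  · rw [min_eq_right hbx, max_eq_left hbx]
    exact hf b x hb.1 hbx hx.2

section RoughPath

variable {d : ℕ}

def outerProd (x y : Fin d → ℝ) : Fin d → Fin d → ℝ := fun α β => x α * y β

lemma norm_outerProd_le (x y : Fin d → ℝ) : ‖outerProd x y‖ ≤ ‖x‖ * ‖y‖ := by
  refine (pi_norm_le_iff_of_nonneg (by positivity)).2 fun α =>
    (pi_norm_le_iff_of_nonneg (by positivity)).2 fun β => ?_
  rw [outerProd, norm_mul]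
  exact mul_le_mul (norm_le_pi_norm x α) (norm_le_pi_norm y β) (norm_nonneg _) (norm_nonneg _)

lemma ContinuousOn.outerProd {α : Type*} [TopologicalSpace α] {S : Set α}
    {f g : α → Fin d → ℝ} (hf : ContinuousOn f S) (hg : ContinuousOn g S) :
    ContinuousOn (fun a => outerProd (f a) (g a)) S :=
  continuousOn_pi.2 fun i => continuousOn_pi.2 fun j =>
    ((continuous_apply i).comp_continuousOn hf).mul ((continuous_apply j).comp_continuousOn hg)

lemma abs_apply_apply_le_norm (M : Fin d → Fin d → ℝ) (α β : Fin d) : |M α β| ≤ ‖M‖ :=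
  (Real.norm_eq_abs _ ▸ norm_le_pi_norm (M α) β).trans (norm_le_pi_norm M α)

lemma HolderPath.exists_nonneg {T r : ℝ} {ω : ℝ → ℝ → ℝ} {Y : ℝ → Fin d → ℝ}
    (hY : HolderPath T r ω Y) (hω : IsControl T ω) :
    ∃ K, 0 ≤ K ∧ ∀ s t, 0 ≤ s → s ≤ t → t ≤ T → ‖Y t - Y s‖ ≤ K * ω s t ^ r := by
  obtain ⟨-, K, hK⟩ := hY
  exact ⟨max K 0, le_max_right K 0, fun s t hs hst ht => (hK s t hs hst ht).trans
    (by gcongr; exacts [Real.rpow_nonneg (hω.nonneg hs hst ht) r, le_max_left K 0])⟩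

lemma norm_outerProd_sub_le {T p CX : ℝ} {ω : ℝ → ℝ → ℝ} {X : ℝ → Fin d → ℝ}
    (hω : IsControl T ω) (hp : 0 < p) (hCX : 0 ≤ CX)
    (hX : ∀ s t, 0 ≤ s → s ≤ t → t ≤ T → ‖X t - X s‖ ≤ CX * ω s t ^ (1 / p))
    {s u t : ℝ} (hs : 0 ≤ s) (hsu : s ≤ u) (hut : u ≤ t) (ht : t ≤ T) :
    ‖outerProd (X u - X s) (X t - X u)‖ ≤ CX ^ 2 * ω s t ^ (2 / p) := by
  have hωst := hω.nonneg hs (hsu.trans hut) ht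
  have h₁ : ‖X u - X s‖ ≤ CX * ω s t ^ (1 / p) := (hX s u hs hsu (hut.trans ht)).trans
    (by gcongr; exacts [hω.nonneg hs hsu (hut.trans ht), hω.mono hs le_rfl hsu hut ht])
  have h₂ : ‖X t - X u‖ ≤ CX * ω s t ^ (1 / p) := (hX u t (hs.trans hsu) hut ht).trans
    (by gcongr; exacts [hω.nonneg (hs.trans hsu) hut ht, hω.mono hs hsu hut le_rfl ht])
  calc ‖outerProd (X u - X s) (X t - X u)‖ ≤ ‖X u - X s‖ * ‖X t - X u‖ := norm_outerProd_le _ _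
    _ ≤ (CX * ω s t ^ (1 / p)) * (CX * ω s t ^ (1 / p)) :=
      mul_le_mul h₁ h₂ (norm_nonneg _) (by positivity)
    _ = CX ^ 2 * ω s t ^ (2 / p) := by
      rw [mul_mul_mul_comm, ← Real.rpow_add_of_nonneg hωst (by positivity) (by positivity)]
      ring_nf

variable {T : ℝ} {ω : ℝ → ℝ → ℝ} {X : ℝ → Fin d → ℝ}

lemma abs_bracket_le (XX Xt : ℝ → ℝ → Fin d → Fin d → ℝ) (s t : ℝ) (α β : Fin d) :
    |bracket X XX s t α β| ≤
      |(X t α - X s α) * (X t β - X s β) - Xt s t α β - Xt s t β α| + 2 * ‖XX s t - Xt s t‖ := by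
  have h₁ := abs_apply_apply_le_norm (XX s t - Xt s t) α β
  have h₂ := abs_apply_apply_le_norm (XX s t - Xt s t) β α
  simp only [Pi.sub_apply] at h₁ h₂
  have e : bracket X XX s t α β =
      ((X t α - X s α) * (X t β - X s β) - Xt s t α β - Xt s t β α) -
        (XX s t α β - Xt s t α β) - (XX s t β α - Xt s t β α) := by
    simp only [bracket]; ring
  rw [e]
  linarith [abs_sub (((X t α - X s α) * (X t β - X s β) - Xt s t α β - Xt s t β α) -
      (XX s t α β - Xt s t α β)) (XX s t β α - Xt s t β α),
    abs_sub ((X t α - X s α) * (X t β - X s β) - Xt s t α β - Xt s t β α)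
      (XX s t α β - Xt s t α β)]

def SatisfiesChen (T : ℝ) (X : ℝ → Fin d → ℝ) (XX : ℝ → ℝ → Fin d → Fin d → ℝ) : Prop :=
  ∀ s u t : ℝ, 0 ≤ s → s ≤ u → u ≤ t → t ≤ T → ∀ α β : Fin d,
    XX s t α β = XX s u α β + (X u α - X s α) * (X t β - X u β) + XX u t α β

namespace SatisfiesChen

variable {XX XX' : ℝ → ℝ → Fin d → Fin d → ℝ}

lemma eq_add (h : SatisfiesChen T X XX) {s u t : ℝ} (hs : 0 ≤ s) (hsu : s ≤ u) (hut : u ≤ t)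
    (ht : t ≤ T) : XX s t = XX s u + outerProd (X u - X s) (X t - X u) + XX u t :=
  funext₂ (h s u t hs hsu hut ht)

lemma bracket_add (h : SatisfiesChen T X XX) {s u t : ℝ} (hs : 0 ≤ s) (hsu : s ≤ u)
    (hut : u ≤ t) (ht : t ≤ T) (α β : Fin d) :
    bracket X XX s t α β = bracket X XX s u α β + bracket X XX u t α β := by
  simp only [bracket, h s u t hs hsu hut ht α β, h s u t hs hsu hut ht β α]
  ring

theorem eq_of_near (hω : IsControl T ω) {θ K K' : ℝ} (hθ : 1 < θ)
    {Xt : ℝ → ℝ → Fin d → Fin d → ℝ} (h : SatisfiesChen T X XX)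
    (h' : SatisfiesChen T X XX')
    (hK : ∀ s t, 0 ≤ s → s ≤ t → t ≤ T → ‖XX s t - Xt s t‖ ≤ K * ω s t ^ θ)
    (hK' : ∀ s t, 0 ≤ s → s ≤ t → t ≤ T → ‖XX' s t - Xt s t‖ ≤ K' * ω s t ^ θ)
    {s t : ℝ} (hs : 0 ≤ s) (hst : s ≤ t) (ht : t ≤ T) : XX s t = XX' s t := by
  refine sub_eq_zero.1 <| hω.eq_zero_of_additive hθ (g := fun s t => XX s t - XX' s t)
    (L := K + K') (fun _ _ _ hs hsu hut ht => ?_) (fun a b ha hab hb => ?_) hs hst ht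
  · rw [h.eq_add hs hsu hut ht, h'.eq_add hs hsu hut ht]; abel
  · calc ‖XX a b - XX' a b‖ ≤ ‖XX a b - Xt a b‖ + ‖XX' a b - Xt a b‖ :=
          norm_sub_rev (XX' a b) (Xt a b) ▸ norm_sub_le_norm_sub_add_norm_sub _ _ _
      _ ≤ (K + K') * ω a b ^ θ := by linarith [hK a b ha hab hb, hK' a b ha hab hb]

theorem bracket_eq_zero_of_near (hω : IsControl T ω) {θ C K : ℝ} (hθ : 1 < θ)
    {Xt : ℝ → ℝ → Fin d → Fin d → ℝ} (h : SatisfiesChen T X XX)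
    (hK : ∀ s t, 0 ≤ s → s ≤ t → t ≤ T → ‖XX s t - Xt s t‖ ≤ K * ω s t ^ θ)
    (hsym : ∀ s t, 0 ≤ s → s ≤ t → t ≤ T → ∀ α β : Fin d,
      |(X t α - X s α) * (X t β - X s β) - Xt s t α β - Xt s t β α| ≤ C * ω s t ^ θ)
    {s t : ℝ} (hs : 0 ≤ s) (hst : s ≤ t) (ht : t ≤ T) (α β : Fin d) :
    bracket X XX s t α β = 0 :=
  hω.eq_zero_of_additive hθ (g := fun s t => bracket X XX s t α β) (L := C + 2 * K)
    (fun _ _ _ hs hsu hut ht => h.bracket_add hs hsu hut ht α β)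
    (fun a b ha hab hb => (abs_bracket_le XX Xt a b α β).trans <| by
      linarith [hsym a b ha hab hb α β, hK a b ha hab hb]) hs hst ht

/-- Chen's relation writes `XX s t` through `XX 0 ·` and increments of `X`, so `XX` inherits
continuity from `t ↦ XX 0 t`. -/
theorem continuousOn (hω : IsControl T ω) (h : SatisfiesChen T X XX)
    (hX : ContinuousOn X (Icc 0 T)) {c r : ℝ} (hr : 0 < r)
    (hXX : ∀ s t, 0 ≤ s → s ≤ t → t ≤ T → ‖XX s t‖ ≤ c * ω s t ^ r) :
    ContinuousOn (fun q : ℝ × ℝ => XX q.1 q.2) {q : ℝ × ℝ | 0 ≤ q.1 ∧ q.1 ≤ q.2 ∧ q.2 ≤ T} := by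
  set S := {q : ℝ × ℝ | 0 ≤ q.1 ∧ q.1 ≤ q.2 ∧ q.2 ≤ T}
  have hX₁ : ContinuousOn (fun q : ℝ × ℝ => X q.1) S :=
    hX.comp continuous_fst.continuousOn fun q hq => ⟨hq.1, hq.2.1.trans hq.2.2⟩
  have hX₂ : ContinuousOn (fun q : ℝ × ℝ => X q.2) S :=
    hX.comp continuous_snd.continuousOn fun q hq => ⟨hq.1.trans hq.2.1, hq.2.2⟩
  have hXX₀ : ContinuousOn (XX 0) (Icc 0 T) := by
    refine continuousOn_Icc_of_norm_sub_le
      (g := fun a b => ‖X a - X 0‖ * ‖X b - X a‖ + c * ω a b ^ r)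
      (((hX₁.sub continuousOn_const).norm.mul (hX₂.sub hX₁).norm).add
        (continuousOn_const.mul (hω.1.rpow_const fun _ _ => Or.inr hr.le)))
      (fun t ht => by simp [hω.diag ht.1 ht.2, Real.zero_rpow hr.ne'])
      (fun a b ha hab hb => ?_)
    rw [h.eq_add le_rfl ha hab hb, add_assoc, add_sub_cancel_left]
    exact (norm_add_le _ _).trans (add_le_add (norm_outerProd_le _ _) (hXX a b ha hab hb))
  have hXX₀₂ : ContinuousOn (fun q : ℝ × ℝ => XX 0 q.2) S :=
    hXX₀.comp continuous_snd.continuousOn fun q hq => ⟨hq.1.trans hq.2.1, hq.2.2⟩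
  have hXX₀₁ : ContinuousOn (fun q : ℝ × ℝ => XX 0 q.1) S :=
    hXX₀.comp continuous_fst.continuousOn fun q hq => ⟨hq.1, hq.2.1.trans hq.2.2⟩
  have hincr : ContinuousOn (fun q : ℝ × ℝ => outerProd (X q.1 - X 0) (X q.2 - X q.1)) S :=
    (hX₁.sub continuousOn_const).outerProd (hX₂.sub hX₁)
  refine ((hXX₀₂.sub hXX₀₁).sub hincr).congr fun q hq => ?_
  simp only [Pi.sub_apply, h.eq_add le_rfl hq.1 hq.2.1 hq.2.2]
  abel

end SatisfiesChen

end RoughPath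

section AlmostRoughPath

variable {d : ℕ}

/-- Anchoring the first increment at `X 0` turns the Chen defect of `Xt` into the additivity
defect of this germ (`roughGerm_sub_sub`). -/
def roughGerm (X : ℝ → Fin d → ℝ) (Xt : ℝ → ℝ → Fin d → Fin d → ℝ) (s t : ℝ) :
    Fin d → Fin d → ℝ :=
  Xt s t + outerProd (X s - X 0) (X t - X s)

lemma roughGerm_sub_sub (X : ℝ → Fin d → ℝ) (Xt : ℝ → ℝ → Fin d → Fin d → ℝ) (s u t : ℝ) :
    roughGerm X Xt s t - roughGerm X Xt s u - roughGerm X Xt u t =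
      Xt s t - Xt s u - outerProd (X u - X s) (X t - X u) - Xt u t := by
  funext α β
  simp only [roughGerm, outerProd, Pi.add_apply, Pi.sub_apply]
  ring

lemma isAlmostAdditive_roughGerm {T p C θ CX : ℝ} {ω : ℝ → ℝ → ℝ} {X : ℝ → Fin d → ℝ}
    {Xt : ℝ → ℝ → Fin d → Fin d → ℝ} (hω : IsControl T ω) (hp : 0 < p) (hC : 0 ≤ C)
    (hCX : 0 ≤ CX) (hX : ∀ s t, 0 ≤ s → s ≤ t → t ≤ T → ‖X t - X s‖ ≤ CX * ω s t ^ (1 / p))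
    (hbound : ∀ s t, 0 ≤ s → s ≤ t → t ≤ T → ‖Xt s t‖ ≤ C * ω s t ^ (2 / p))
    (hchen : ∀ s u t, 0 ≤ s → s ≤ u → u ≤ t → t ≤ T →
      ‖Xt s t - Xt s u - outerProd (X u - X s) (X t - X u) - Xt u t‖ ≤ C * ω s t ^ θ) :
    IsAlmostAdditive T ω (3 * C + CX ^ 2) (max θ (2 / p)) (roughGerm X Xt) := by
  intro s u t hs hsu hut ht
  have hst := hsu.trans hut
  rw [roughGerm_sub_sub]
  rcases le_total θ (2 / p) with h | h
  · rw [max_eq_right h]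
    have hsub {a b : ℝ} (ha : s ≤ a) (hab : a ≤ b) (hb : b ≤ t) :
        ‖Xt a b‖ ≤ C * ω s t ^ (2 / p) := (hbound a b (hs.trans ha) hab (hb.trans ht)).trans
      (by gcongr; exacts [hω.nonneg (hs.trans ha) hab (hb.trans ht),
        hω.mono hs ha hab hb ht])
    calc ‖Xt s t - Xt s u - outerProd (X u - X s) (X t - X u) - Xt u t‖
        ≤ ‖Xt s t‖ + ‖Xt s u‖ + ‖outerProd (X u - X s) (X t - X u)‖ + ‖Xt u t‖ :=
          (norm_sub_le _ _).trans (add_le_add_left ((norm_sub_le _ _).trans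
            (add_le_add_left (norm_sub_le _ _) _)) _)
      _ ≤ C * ω s t ^ (2 / p) + C * ω s t ^ (2 / p) + CX ^ 2 * ω s t ^ (2 / p) +
          C * ω s t ^ (2 / p) :=
        add_le_add (add_le_add (add_le_add (hsub le_rfl hst le_rfl) (hsub le_rfl hsu hut))
          (norm_outerProd_sub_le hω hp hCX hX hs hsu hut ht)) (hsub hsu hut le_rfl)
      _ = (3 * C + CX ^ 2) * ω s t ^ (2 / p) := by ring
  · rw [max_eq_left h]
    exact (hchen s u t hs hsu hut ht).trans
      (by gcongr; exacts [Real.rpow_nonneg (hω.nonneg hs hst ht) _, by nlinarith [sq_nonneg CX]])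

theorem exists_satisfiesChen_near {T p C θ CX : ℝ} {ω : ℝ → ℝ → ℝ} {X : ℝ → Fin d → ℝ}
    {Xt : ℝ → ℝ → Fin d → Fin d → ℝ} (hω : IsControl T ω) (hp : 0 < p) (hC : 0 ≤ C)
    (hθ : 1 < θ) (hCX : 0 ≤ CX)
    (hX : ∀ s t, 0 ≤ s → s ≤ t → t ≤ T → ‖X t - X s‖ ≤ CX * ω s t ^ (1 / p))
    (hbound : ∀ s t, 0 ≤ s → s ≤ t → t ≤ T → ‖Xt s t‖ ≤ C * ω s t ^ (2 / p))
    (hchen : ∀ s u t, 0 ≤ s → s ≤ u → u ≤ t → t ≤ T →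
      ‖Xt s t - Xt s u - outerProd (X u - X s) (X t - X u) - Xt u t‖ ≤ C * ω s t ^ θ) :
    ∃ XX : ℝ → ℝ → Fin d → Fin d → ℝ, SatisfiesChen T X XX ∧
      (∃ K, ∀ s t, 0 ≤ s → s ≤ t → t ≤ T → ‖XX s t - Xt s t‖ ≤ K * ω s t ^ θ) ∧
      ∃ K', ∀ s t, 0 ≤ s → s ≤ t → t ≤ T → ‖XX s t‖ ≤ K' * ω s t ^ (2 / p) := by
  set γ := max θ (2 / p)
  have hγ : 1 < γ := lt_max_of_lt_left hθ
  obtain ⟨I, hIadd, hI⟩ := (isAlmostAdditive_roughGerm hω hp hC hCX hX hbound hchen).exists_additive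
    hω (by positivity) hγ
  set K := (3 * C + CX ^ 2) / (1 - 2 ^ (1 - γ))
  have hK : 0 ≤ K := div_nonneg (by positivity) (sub_nonneg.2 (two_rpow_one_sub_lt_one hγ).le)
  set XX : ℝ → ℝ → Fin d → Fin d → ℝ := fun s t => I s t - outerProd (X s - X 0) (X t - X s)
  have hXXchen : SatisfiesChen T X XX := fun s u t hs hsu hut ht α β => by
    simp only [XX, hIadd s u t hs hsu hut ht, outerProd, Pi.add_apply, Pi.sub_apply]
    ring
  have hXXsub (s t : ℝ) : XX s t - Xt s t = I s t - roughGerm X Xt s t := by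
    simp only [XX, roughGerm]; abel
  have hclose (s t : ℝ) (hs : 0 ≤ s) (hst : s ≤ t) (ht : t ≤ T) :
      ‖XX s t - Xt s t‖ ≤ K * ω 0 T ^ (γ - θ) * ω s t ^ θ := by
    rw [hXXsub, mul_assoc]
    exact (hI s t hs hst ht).trans
      (by gcongr; exact hω.rpow_le_mul_rpow (by linarith) (le_max_left _ _) hs hst ht)
  have hXXbound (s t : ℝ) (hs : 0 ≤ s) (hst : s ≤ t) (ht : t ≤ T) :
      ‖XX s t‖ ≤ (C + K * ω 0 T ^ (γ - 2 / p)) * ω s t ^ (2 / p) := by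
    have hγ₂ := hω.rpow_le_mul_rpow (by positivity) (le_max_right θ (2 / p)) hs hst ht
    calc ‖XX s t‖ ≤ ‖Xt s t‖ + ‖XX s t - Xt s t‖ := norm_le_insert' _ _
      _ ≤ C * ω s t ^ (2 / p) + K * (ω 0 T ^ (γ - 2 / p) * ω s t ^ (2 / p)) :=
        add_le_add (hbound s t hs hst ht) ((hXXsub s t ▸ hI s t hs hst ht).trans (by gcongr))
      _ = (C + K * ω 0 T ^ (γ - 2 / p)) * ω s t ^ (2 / p) := by ring
  exact ⟨XX, hXXchen, ⟨_, hclose⟩, ⟨_, hXXbound⟩⟩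

end AlmostRoughPath

theorem statement4_general (T p : ℝ) (hp1 : 1 ≤ p) (d : ℕ)
    (ω : ℝ → ℝ → ℝ) (hω : IsControl T ω)
    (X : ℝ → Fin d → ℝ) (hX : HolderPath T (1 / p) ω X)
    (Xt : ℝ → ℝ → Fin d → Fin d → ℝ) (C θ : ℝ) (hC : 0 ≤ C) (hθ : 1 < θ)
    (hbound : ∀ s t : ℝ, 0 ≤ s → s ≤ t → t ≤ T → ‖Xt s t‖ ≤ C * ω s t ^ (2 / p))
    (hchen : ∀ s u t : ℝ, 0 ≤ s → s ≤ u → u ≤ t → t ≤ T →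
      ‖(fun (α β : Fin d) =>
          Xt s t α β - Xt s u α β - (X u α - X s α) * (X t β - X u β) - Xt u t α β)‖
        ≤ C * ω s t ^ θ) :
    ∃ XX : ℝ → ℝ → Fin d → Fin d → ℝ,
      IsRoughPath T p ω X XX ∧
      (∃ C' : ℝ, ∀ s t : ℝ, 0 ≤ s → s ≤ t → t ≤ T →
        ‖(fun (α β : Fin d) => XX s t α β - Xt s t α β)‖ ≤ C' * ω s t ^ θ) ∧
      (∀ XX' : ℝ → ℝ → Fin d → Fin d → ℝ,
        IsRoughPath T p ω X XX' →
        (∃ C'' : ℝ, ∀ s t : ℝ, 0 ≤ s → s ≤ t → t ≤ T →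
          ‖(fun (α β : Fin d) => XX' s t α β - Xt s t α β)‖ ≤ C'' * ω s t ^ θ) →
        ∀ s t : ℝ, 0 ≤ s → s ≤ t → t ≤ T → XX' s t = XX s t) ∧
      ((∀ s t : ℝ, 0 ≤ s → s ≤ t → t ≤ T → ∀ α β : Fin d,
          |(X t α - X s α) * (X t β - X s β) - Xt s t α β - Xt s t β α| ≤ C * ω s t ^ θ) →
        ∀ s t : ℝ, 0 ≤ s → s ≤ t → t ≤ T → ∀ α β : Fin d, bracket X XX s t α β = 0) := by
  obtain ⟨CX, hCX, hXb⟩ := hX.exists_nonneg hω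
  have hp : 0 < p := by linarith
  obtain ⟨XX, hXX, ⟨K, hclose⟩, ⟨K', hXXbound⟩⟩ :=
    exists_satisfiesChen_near hω hp hC hθ hCX hXb hbound hchen
  refine ⟨XX, ⟨hX, hXX.continuousOn hω hX.1 (by positivity) hXXbound, ⟨K', hXXbound⟩, hXX⟩,
    ⟨K, hclose⟩, fun XX' hXX' ⟨K'', hK''⟩ s t hs hst ht => ?_,
    fun hsym s t hs hst ht α β => hXX.bracket_eq_zero_of_near hω hθ hclose hsym hs hst ht α β⟩
  exact SatisfiesChen.eq_of_near hω hθ hXX'.2.2.2 hXX hK'' hclose hs hst ht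

/-- Every almost rough path is at `O(ω^θ)`-distance of a unique genuine
rough path; almost geometric rough paths give rise to geometric rough paths. -/
theorem statement4 (T p : ℝ) (hT : 0 ≤ T) (hp1 : 1 ≤ p) (hp3 : p < 3) (d : ℕ)
    (ω : ℝ → ℝ → ℝ) (hω : IsControl T ω)
    (X : ℝ → Fin d → ℝ) (hX : HolderPath T (1 / p) ω X)
    (Xt : ℝ → ℝ → Fin d → Fin d → ℝ) (C θ : ℝ) (hC : 0 ≤ C) (hθ : 1 < θ)
    (hbound : ∀ s t : ℝ, 0 ≤ s → s ≤ t → t ≤ T → ‖Xt s t‖ ≤ C * ω s t ^ (2 / p))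
    (hchen : ∀ s u t : ℝ, 0 ≤ s → s ≤ u → u ≤ t → t ≤ T →
      ‖(fun (α β : Fin d) =>
          Xt s t α β - Xt s u α β - (X u α - X s α) * (X t β - X u β) - Xt u t α β)‖
        ≤ C * ω s t ^ θ) :
    ∃ XX : ℝ → ℝ → Fin d → Fin d → ℝ,
      IsRoughPath T p ω X XX ∧
      (∃ C' : ℝ, ∀ s t : ℝ, 0 ≤ s → s ≤ t → t ≤ T →
        ‖(fun (α β : Fin d) => XX s t α β - Xt s t α β)‖ ≤ C' * ω s t ^ θ) ∧
      (∀ XX' : ℝ → ℝ → Fin d → Fin d → ℝ,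
        IsRoughPath T p ω X XX' →
        (∃ C'' : ℝ, ∀ s t : ℝ, 0 ≤ s → s ≤ t → t ≤ T →
          ‖(fun (α β : Fin d) => XX' s t α β - Xt s t α β)‖ ≤ C'' * ω s t ^ θ) →
        ∀ s t : ℝ, 0 ≤ s → s ≤ t → t ≤ T → XX' s t = XX s t) ∧
      ((∀ s t : ℝ, 0 ≤ s → s ≤ t → t ≤ T → ∀ α β : Fin d,
          |(X t α - X s α) * (X t β - X s β) - Xt s t α β - Xt s t β α| ≤ C * ω s t ^ θ) →
        ∀ s t : ℝ, 0 ≤ s → s ≤ t → t ≤ T → ∀ α β : Fin d, bracket X XX s t α β = 0) :=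
  statement4_general T p hp1 d ω hω X hX Xt C θ hC hθ hbound hchen
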